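/- There exist pointed 2-models M,w and N,v such that, with φ₂ = □(¬p ∨ ¬q) ∧ ◇q and ψ₂ = □(p ∧ r) ∧ □(p ∧ ¬r): M,w ⊨ φ₂, N,v ⊨ ψ₂, and for every WAML formula γ containing no propositional letter other than p, M,w ⊨ γ iff N,v ⊨ γ. (Concretely one may take M with worlds w,w₁,w₂,w₃,w₄, ternary relation {(w,w₁,w₂),(w,w₃,w₄)}, and valuation making p true at w₁,w₂,w₃ and q true at w₃,w₄ only; and N with worlds v,v₁,v₂, ternary relation {(v,v₁,v₂)}, and valuation making p true at v₁,v₂ and r true at v₂ only.) -/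

import Mathlib

namespace WAML

/-- The language of WAML: atoms, negation, conjunction, and the (diagonal) box. -/
inductive Formula : Type
  | atom : ℕ → Formula
  | neg : Formula → Formula
  | and : Formula → Formula → Formula
  | box : Formula → Formula

namespace Formula

def imp (φ ψ : Formula) : Formula := neg (and φ (neg ψ))
def or (φ ψ : Formula) : Formula := neg (and (neg φ) (neg ψ))
def dia (φ : Formula) : Formula := neg (box (neg φ))
def bot : Formula := and (atom 0) (neg (atom 0))

/-- The set of propositional letters occurring in a formula. -/
def letters : Formula → Set ℕ
  | atom p => {p}
  | neg φ => letters φ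
  | and φ ψ => letters φ ∪ letters ψ
  | box φ => letters φ

end Formula

/-- Conjunction of a list of formulas. -/
def conjList : List Formula → Formula
  | [] => Formula.neg Formula.bot
  | [φ] => φ
  | φ :: ψ :: rest => Formula.and φ (conjList (ψ :: rest))

/-- Disjunction of a list of formulas. -/
def disjList : List Formula → Formula
  | [] => Formula.bot
  | [φ] => φ
  | φ :: ψ :: rest => Formula.or φ (disjList (ψ :: rest))

/-- ⋁_{0 ≤ i < j ≤ n} (φ_i ∧ φ_j) -/
def pairDisj (n : ℕ) (φ : Fin (n+1) → Formula) : Formula :=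
  disjList (((List.finRange (n+1)).product (List.finRange (n+1))).filterMap
    (fun p => if p.1 < p.2 then some (Formula.and (φ p.1) (φ p.2)) else none))

/-- The axiom (scheme) K_n : □φ₀ ∧ ⋯ ∧ □φ_n → □⋁_{0 ≤ i < j ≤ n} (φ_i ∧ φ_j). -/
def KnAxiom (n : ℕ) (φ : Fin (n+1) → Formula) : Formula :=
  Formula.imp (conjList ((List.finRange (n+1)).map (fun i => Formula.box (φ i))))
    (Formula.box (pairDisj n φ))

/-- A propositional tautology (including all substitution instances): a formula true under
every valuation of formulas respecting ¬ and ∧. -/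
def Tautology (φ : Formula) : Prop :=
  ∀ v : Formula → Prop,
    (∀ ψ, v (Formula.neg ψ) ↔ ¬ v ψ) →
    (∀ ψ χ, v (Formula.and ψ χ) ↔ v ψ ∧ v χ) →
    v φ

/-- The proof system 𝕂_n: propositional tautologies, K_n, modus ponens, necessitation, RM. -/
inductive KProof (n : ℕ) : Formula → Prop
  | taut {φ} : Tautology φ → KProof n φ
  | kn (φ : Fin (n+1) → Formula) : KProof n (KnAxiom n φ)
  | mp {φ ψ} : KProof n (Formula.imp φ ψ) → KProof n φ → KProof n ψ
  | nec {φ} : KProof n φ → KProof n (Formula.box φ)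
  | rm {φ ψ} : KProof n (Formula.imp φ ψ) →
      KProof n (Formula.imp (Formula.box φ) (Formula.box ψ))

/-- An n-model: a nonempty set of worlds, an (n+1)-ary relation, a valuation. -/
structure NModel (n : ℕ) where
  World : Type
  nonempty : Nonempty World
  R : World → (Fin n → World) → Prop
  V : World → ℕ → Prop

/-- Diagonal semantics. -/
def Sat {n : ℕ} (M : NModel n) : M.World → Formula → Prop
  | w, .atom p => M.V w p
  | w, .neg φ => ¬ Sat M w φ
  | w, .and φ ψ => Sat M w φ ∧ Sat M w ψ
  | w, .box φ => ∀ v : Fin n → M.World, M.R w v → ∃ i, Sat M (v i) φ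

/-- wa^n-bisimulation between two n-models. -/
def IsBisim {n : ℕ} (M M' : NModel n) (Z : M.World → M'.World → Prop) : Prop :=
  (∃ w w', Z w w') ∧
  (∀ w w', Z w w' → ∀ p, M.V w p ↔ M'.V w' p) ∧
  (∀ w w' (v : Fin n → M.World), Z w w' → M.R w v →
    ∃ v' : Fin n → M'.World, M'.R w' v' ∧ ∀ j, ∃ i, Z (v i) (v' j)) ∧
  (∀ w w' (v' : Fin n → M'.World), Z w w' → M'.R w' v' →
    ∃ v : Fin n → M.World, M.R w v ∧ ∀ i, ∃ j, Z (v i) (v' j))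

/-- wa^n-bisimilarity of pointed n-models. -/
def Bisimilar {n : ℕ} (M M' : NModel n) (w : M.World) (w' : M'.World) : Prop :=
  ∃ Z, IsBisim M M' Z ∧ Z w w'

/-- Image-finiteness: each world has finitely many successor n-tuples. -/
def ImageFinite {n : ℕ} (M : NModel n) : Prop :=
  ∀ w : M.World, {v : Fin n → M.World | M.R w v}.Finite

/-- First-order correspondence language L¹_n: formulas with free variables among Fin k
(de Bruijn style, `all` binds the last variable). -/
inductive FO (n : ℕ) : ℕ → Type
  | pred {k} : ℕ → Fin k → FO n k
  | rel {k} : (Fin (n+1) → Fin k) → FO n k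
  | eq {k} : Fin k → Fin k → FO n k
  | fal {k} : FO n k
  | not {k} : FO n k → FO n k
  | and {k} : FO n k → FO n k → FO n k
  | or {k} : FO n k → FO n k → FO n k
  | imp {k} : FO n k → FO n k → FO n k
  | all {k} : FO n (k+1) → FO n k

/-- Realization of first-order formulas in an n-model (seen as an L¹_n-structure). -/
def FO.Realize {n : ℕ} (M : NModel n) : ∀ {k}, FO n k → (Fin k → M.World) → Prop
  | _, .pred p x, a => M.V (a x) p
  | _, .rel ts, a => M.R (a (ts 0)) (fun i => a (ts i.succ))
  | _, .eq x y, a => a x = a y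
  | _, .fal, _ => False
  | _, .not φ, a => ¬ FO.Realize M φ a
  | _, .and φ ψ, a => FO.Realize M φ a ∧ FO.Realize M ψ a
  | _, .or φ ψ, a => FO.Realize M φ a ∨ FO.Realize M ψ a
  | _, .imp φ ψ, a => FO.Realize M φ a → FO.Realize M ψ a
  | _, .all φ, a => ∀ x, FO.Realize M φ (Fin.snoc a x)

/-- Quantifier rank. -/
def FO.qr {n : ℕ} : ∀ {k}, FO n k → ℕ
  | _, .pred _ _ => 0
  | _, .rel _ => 0
  | _, .eq _ _ => 0
  | _, .fal => 0
  | _, .not φ => φ.qr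
  | _, .and φ ψ => max φ.qr ψ.qr
  | _, .or φ ψ => max φ.qr ψ.qr
  | _, .imp φ ψ => max φ.qr ψ.qr
  | _, .all φ => φ.qr + 1

/-- Renaming of free variables. -/
def FO.rename {n : ℕ} : ∀ {k k'}, (Fin k → Fin k') → FO n k → FO n k'
  | _, _, f, .pred p x => .pred p (f x)
  | _, _, f, .rel ts => .rel (fun i => f (ts i))
  | _, _, f, .eq x y => .eq (f x) (f y)
  | _, _, _, .fal => .fal
  | _, _, f, .not φ => .not (φ.rename f)
  | _, _, f, .and φ ψ => .and (φ.rename f) (ψ.rename f)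
  | _, _, f, .or φ ψ => .or (φ.rename f) (ψ.rename f)
  | _, _, f, .imp φ ψ => .imp (φ.rename f) (ψ.rename f)
  | _, _, f, .all φ =>
      .all (φ.rename (fun j => Fin.lastCases (Fin.last _) (fun a => (f a).castSucc) j))

/-- A block of m universal quantifiers (binding the last m variables). -/
def FO.alls {n k : ℕ} : ∀ (m : ℕ), FO n (k + m) → FO n k
  | 0, φ => φ
  | m+1, φ => FO.alls m φ.all

/-- Disjunction of a list of first-order formulas. -/
def FO.disjList {n k : ℕ} : List (FO n k) → FO n k
  | [] => .fal
  | [φ] => φ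
  | φ :: ψ :: rest => .or φ (FO.disjList (ψ :: rest))

/-- The standard translation ST_x (with x the unique free variable). -/
def ST (n : ℕ) : Formula → FO n 1
  | .atom p => .pred p 0
  | .neg φ => .not (ST n φ)
  | .and φ ψ => .and (ST n φ) (ST n ψ)
  | .box φ =>
      let ψ := ST n φ
      FO.alls n (FO.imp
        (.rel (Fin.cases (Fin.castAdd n (0 : Fin 1)) (fun i => Fin.natAdd 1 i)))
        (FO.disjList ((List.finRange n).map
          (fun i => ψ.rename (fun _ => Fin.natAdd 1 i)))))

/-- α(x) (one free variable) is invariant under wa^n-bisimulation. -/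
def BisimInvariant (n : ℕ) (α : FO n 1) : Prop :=
  ∀ (M N : NModel n) (Z : M.World → N.World → Prop) (w : M.World) (v : N.World),
    IsBisim M N Z → Z w v →
    (FO.Realize M α (fun _ => w) ↔ FO.Realize N α (fun _ => v))

/-- α(x) is invariant under wa^n-bisimulation between finite n-models. -/
def BisimInvariantFin (n : ℕ) (α : FO n 1) : Prop :=
  ∀ (M N : NModel n) (Z : M.World → N.World → Prop) (w : M.World) (v : N.World),
    Finite M.World → Finite N.World → IsBisim M N Z → Z w v →
    (FO.Realize M α (fun _ => w) ↔ FO.Realize N α (fun _ => v))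

/-- Admissible sequences for the unraveling of M around w. The first entry is
((w,…,w), 1) (index 0 in 0-based counting) and consecutive entries are related by R. -/
def GoodSeq {n : ℕ} [NeZero n] (M : NModel n) (w : M.World)
    (s : List ((Fin n → M.World) × Fin n)) : Prop :=
  (∃ rest, s = ((fun _ => w), (0 : Fin n)) :: rest) ∧
  List.Chain' (fun a b => M.R (a.1 a.2) b.1) s

/-- The world of M corresponding to a sequence: v⃗_m[i_m] (and w for the empty list). -/
def rmap {n : ℕ} (M : NModel n) (w : M.World)
    (s : List ((Fin n → M.World) × Fin n)) : M.World :=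
  match s.getLast? with
  | some a => a.1 a.2
  | none => w

/-- The unraveling M_w of M around w. -/
def Unravel {n : ℕ} [NeZero n] (M : NModel n) (w : M.World) : NModel n where
  World := { s : List ((Fin n → M.World) × Fin n) // GoodSeq M w s }
  nonempty := ⟨⟨[((fun _ => w), 0)], ⟨⟨[], rfl⟩, List.isChain_singleton _⟩⟩⟩
  R := fun s₀ t =>
    M.R (rmap M w s₀.val) (fun i => rmap M w (t i).val) ∧
    ∀ i, ∃ a, (t i).val = s₀.val ++ [a]
  V := fun s p => M.V (rmap M w s.val) p

/-- The root ⟨((w,…,w),1)⟩ of the unraveling. -/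
def unravelRoot {n : ℕ} [NeZero n] (M : NModel n) (w : M.World) :
    (Unravel M w).World :=
  ⟨[((fun _ => w), 0)], ⟨⟨[], rfl⟩, List.isChain_singleton _⟩⟩

/-- The bounded unraveling M_w|_l : the submodel of M_w of worlds of level at most l. -/
def UnravelB {n : ℕ} [NeZero n] (M : NModel n) (w : M.World) (l : ℕ) : NModel n where
  World := { s : List ((Fin n → M.World) × Fin n) // GoodSeq M w s ∧ s.length ≤ l + 1 }
  nonempty := ⟨⟨[((fun _ => w), 0)], ⟨⟨⟨[], rfl⟩, List.isChain_singleton _⟩, by simp⟩⟩⟩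
  R := fun s₀ t =>
    M.R (rmap M w s₀.val) (fun i => rmap M w (t i).val) ∧
    ∀ i, ∃ a, (t i).val = s₀.val ++ [a]
  V := fun s p => M.V (rmap M w s.val) p

/-- The root of the bounded unraveling. -/
def unravelBRoot {n : ℕ} [NeZero n] (M : NModel n) (w : M.World) (l : ℕ) :
    (UnravelB M w l).World :=
  ⟨[((fun _ => w), 0)], ⟨⟨⟨[], rfl⟩, List.isChain_singleton _⟩, by simp⟩⟩

/-- R^c x y : y is a member of some successor tuple of x. -/
def Rc {n : ℕ} (M : NModel n) (x y : M.World) : Prop :=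
  ∃ v : Fin n → M.World, M.R x v ∧ ∃ i, y = v i

/-- The undirected edge relation induced by R^c. -/
def Edge {n : ℕ} (M : NModel n) (x y : M.World) : Prop := Rc M x y ∨ Rc M y x

/-- There is an undirected R^c-path of length m from x to y. -/
def HasPath {n : ℕ} (M : NModel n) (x y : M.World) (m : ℕ) : Prop :=
  ∃ f : ℕ → M.World, f 0 = x ∧ f m = y ∧ ∀ i < m, Edge M (f i) (f (i+1))

/-- The distance between worlds, in ℕ ∪ {ω} (ω = ⊤ if there is no path). -/
noncomputable def dist {n : ℕ} (M : NModel n) (x y : M.World) : ℕ∞ :=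
  sInf {c : ℕ∞ | ∃ m : ℕ, c = (m : ℕ∞) ∧ HasPath M x y m}

/-- One literal among the letters r₁,…,r_m, i.e. the atoms 2,…,m+1. -/
def IsLit (m : ℕ) (φ : Formula) : Prop :=
  ∃ j, j < m ∧ (φ = Formula.atom (j+2) ∨ φ = Formula.neg (Formula.atom (j+2)))

/-- A conjunction of literals over the letters r₁,…,r_m. -/
inductive IsConjLits (m : ℕ) : Formula → Prop
  | lit {φ} : IsLit m φ → IsConjLits m φ
  | conj {φ ψ} : IsConjLits m φ → IsConjLits m ψ → IsConjLits m (Formula.and φ ψ)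

/-- The Craig Interpolation Property for 𝕂_n. -/
def HasCIP (n : ℕ) : Prop :=
  ∀ φ ψ : Formula, KProof n (φ.imp ψ) →
    ∃ γ : Formula, γ.letters ⊆ φ.letters ∩ ψ.letters ∧
      KProof n (φ.imp γ) ∧ KProof n (γ.imp ψ)


/-! Letters p, q, r are the atoms 0, 1, 2. Once q and r are forgotten, relating w to v and each of
w₁, w₂, w₃ to each of v₁, v₂ is a wa²-bisimulation: the back-and-forth clauses only ask every world
of the answering tuple to have a partner somewhere in the challenging one, so the ¬p-world w₄ never
needs a partner. WAML formulas are invariant under wa-bisimulation. -/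

def NModel.restrict {n : ℕ} (M : NModel n) (L : Set ℕ) : NModel n :=
  { M with V := fun w p => p ∈ L ∧ M.V w p }

theorem sat_restrict_iff {n : ℕ} (M : NModel n) {L : Set ℕ} {γ : Formula} (hγ : γ.letters ⊆ L)
    (w : M.World) : Sat (M.restrict L) w γ ↔ Sat M w γ := by
  induction γ generalizing w with
  | atom p => exact and_iff_right (hγ rfl)
  | neg φ ih => exact not_congr (ih hγ w)
  | and φ ψ ihφ ihψ =>
    exact and_congr (ihφ (fun _ h => hγ (Or.inl h)) w) (ihψ (fun _ h => hγ (Or.inr h)) w)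
  | box φ ih => exact forall₂_congr fun v _ => exists_congr fun i => ih hγ (v i)

theorem sat_iff_of_isBisim {n : ℕ} {M M' : NModel n} {Z : M.World → M'.World → Prop}
    (hZ : IsBisim M M' Z) (γ : Formula) {w : M.World} {w' : M'.World} (hw : Z w w') :
    Sat M w γ ↔ Sat M' w' γ := by
  obtain ⟨-, hV, hforth, hback⟩ := hZ
  induction γ generalizing w w' with
  | atom p => exact hV w w' hw p
  | neg φ ih => exact not_congr (ih hw)
  | and φ ψ ihφ ihψ => exact and_congr (ihφ hw) (ihψ hw)
  | box φ ih =>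
    constructor
    · intro h v' hv'
      obtain ⟨v, hv, hvv'⟩ := hback w w' v' hw hv'
      obtain ⟨i, hi⟩ := h v hv
      obtain ⟨j, hj⟩ := hvv' i
      exact ⟨j, (ih hj).mp hi⟩
    · intro h v hv
      obtain ⟨v', hv', hvv'⟩ := hforth w w' v hw hv
      obtain ⟨j, hj⟩ := h v' hv'
      obtain ⟨i, hi⟩ := hvv' j
      exact ⟨i, (ih hi).mpr hj⟩

/-- World `0` is `w` and world `k` is `wₖ`. -/
def modelM : NModel 2 where
  World := Fin 5
  nonempty := ⟨0⟩
  R x t := x = 0 ∧ (t = ![1, 2] ∨ t = ![3, 4])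
  V x p := (p = 0 ∧ (x = 1 ∨ x = 2 ∨ x = 3)) ∨ (p = 1 ∧ (x = 3 ∨ x = 4))

/-- World `0` is `v` and world `k` is `vₖ`. -/
def modelN : NModel 2 where
  World := Fin 3
  nonempty := ⟨0⟩
  R x t := x = 0 ∧ t = ![1, 2]
  V x p := (p = 0 ∧ (x = 1 ∨ x = 2)) ∨ (p = 2 ∧ x = 2)

def pBisim (x : Fin 5) (y : Fin 3) : Prop :=
  (x = 0 ∧ y = 0) ∨ ((x = 1 ∨ x = 2 ∨ x = 3) ∧ y ≠ 0)

theorem isBisim_pBisim : IsBisim (modelM.restrict {0}) (modelN.restrict {0}) pBisim := by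
  refine ⟨⟨(0 : Fin 5), (0 : Fin 3), Or.inl ⟨rfl, rfl⟩⟩, ?_, ?_, ?_⟩
  · intro (x : Fin 5) (y : Fin 3) hxy p
    show (p = 0 ∧ _) ↔ (p = 0 ∧ _)
    simp only [modelM, modelN, and_congr_right_iff]
    rintro rfl
    revert x y
    unfold pBisim
    decide
  · rintro (x : Fin 5) (y : Fin 3) t (⟨rfl, rfl⟩ | ⟨hx, -⟩) ⟨hx0, ht⟩
    · refine ⟨(![1, 2] : Fin 2 → Fin 3), ⟨rfl, rfl⟩, fun j => ⟨0, Or.inr ⟨?_, ?_⟩⟩⟩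
      · rcases ht with rfl | rfl <;> simp
      · fin_cases j <;> decide
    · simp [hx0] at hx
  · rintro (x : Fin 5) (y : Fin 3) t (⟨rfl, rfl⟩ | ⟨-, hy⟩) ⟨hy0, rfl⟩
    · exact ⟨(![1, 2] : Fin 2 → Fin 5), ⟨rfl, Or.inl rfl⟩,
        fun i => ⟨0, Or.inr ⟨by fin_cases i <;> simp, by decide⟩⟩⟩
    · exact absurd hy0 hy

theorem sat_modelM_root :
    Sat modelM (0 : Fin 5) (Formula.and
      (Formula.box (Formula.or (Formula.neg (Formula.atom 0)) (Formula.neg (Formula.atom 1))))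
      (Formula.dia (Formula.atom 1))) := by
  simp [Sat, modelM, Formula.or, Formula.dia, Fin.exists_fin_two]

theorem sat_modelN_root :
    Sat modelN (0 : Fin 3) (Formula.and
      (Formula.box (Formula.and (Formula.atom 0) (Formula.atom 2)))
      (Formula.box (Formula.and (Formula.atom 0) (Formula.neg (Formula.atom 2))))) := by
  simp [Sat, modelN, Fin.exists_fin_two]

/-- there are pointed 2-models M,w ⊨ φ₂ and N,v ⊨ ψ₂ that agree on all WAML
formulas whose only propositional letter is p (p = atom 0, q = atom 1, r = atom 2). -/
theorem counterexample_models_K2 :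
    ∃ (M N : NModel 2) (w : M.World) (v : N.World),
      Sat M w (Formula.and
        (Formula.box (Formula.or (Formula.neg (Formula.atom 0)) (Formula.neg (Formula.atom 1))))
        (Formula.dia (Formula.atom 1))) ∧
      Sat N v (Formula.and
        (Formula.box (Formula.and (Formula.atom 0) (Formula.atom 2)))
        (Formula.box (Formula.and (Formula.atom 0) (Formula.neg (Formula.atom 2))))) ∧
      (∀ γ : Formula, γ.letters ⊆ {0} → (Sat M w γ ↔ Sat N v γ)) := by
  refine ⟨modelM, modelN, (0 : Fin 5), (0 : Fin 3), sat_modelM_root, sat_modelN_root,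
    fun γ hγ => ?_⟩
  calc Sat modelM (0 : Fin 5) γ ↔ Sat (modelM.restrict {0}) (0 : Fin 5) γ :=
        (sat_restrict_iff modelM hγ _).symm
    _ ↔ Sat (modelN.restrict {0}) (0 : Fin 3) γ :=
        sat_iff_of_isBisim isBisim_pBisim γ (Or.inl ⟨rfl, rfl⟩)
    _ ↔ Sat modelN (0 : Fin 3) γ := sat_restrict_iff modelN hγ _

end WAML
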